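/- Let f_O be the octonion-type twisting function on (ℤ/2ℤ)^n and let A, B ⊆ (ℤ/2ℤ)^n be finite subsets. Then (A, B) is a multiplicative pair with respect to f_O if and only if every nonzero element w of the intersection (A+A) ∩ (B+B) satisfies |w| ≢ 0 (mod 4), where A+A and B+B denote sumsets and |w| is the weight of w. -/

import Mathlib

open Pointwise

/-- The real sign `(−1)^ε` of an element `ε ∈ ℤ/2ℤ`. -/
def sgn (ε : ZMod 2) : ℝ := if ε = 0 then 1 else -1

/-- The octonion-type twisting function on `(ℤ/2ℤ)^n`:
`f_O(x,y) = Σ_{i<j<k} (x_i x_j y_k + x_i y_j x_k + y_i x_j x_k) + Σ_{i≤j} x_i y_j`. -/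
def fO (n : ℕ) (x y : Fin n → ZMod 2) : ZMod 2 :=
  (∑ k : Fin n, ∑ j ∈ Finset.Iio k, ∑ i ∈ Finset.Iio j,
      (x i * x j * y k + x i * y j * x k + y i * x j * x k)) +
  ∑ j : Fin n, ∑ i ∈ Finset.Iic j, x i * y j

/-- The weight of `x ∈ (ℤ/2ℤ)^n`: the number of indices `i` with `x_i = 1`. -/
def weight (n : ℕ) (x : Fin n → ZMod 2) : ℕ :=
  (Finset.univ.filter fun i => x i = 1).card

-- basic ZMod 2 facts
lemma zmod2_cases (a : ZMod 2) : a = 0 ∨ a = 1 := by revert a; decide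

lemma zmod2_add_self (a : ZMod 2) : a + a = 0 := by revert a; decide

lemma vec_add_self {n : ℕ} (v : Fin n → ZMod 2) : v + v = 0 :=
  funext fun i => zmod2_add_self (v i)

lemma sgn_cases (a : ZMod 2) : sgn a = 1 ∨ sgn a = -1 := by
  unfold sgn; split_ifs <;> simp

lemma sgn_mul (a b : ZMod 2) : sgn a * sgn b = sgn (a + b) := by
  rcases zmod2_cases a with ha | ha <;> rcases zmod2_cases b with hb | hb <;>
    subst ha <;> subst hb <;> norm_num [sgn] <;> decide

lemma sgn_zero : sgn 0 = 1 := by norm_num [sgn]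

lemma sgn_one : sgn 1 = -1 := by norm_num [sgn]

-- auxiliary sums
def fOt (n : ℕ) (x y : Fin n → ZMod 2) : ZMod 2 :=
  ∑ k : Fin n, ∑ j ∈ Finset.Iio k, ∑ i ∈ Finset.Iio j,
      (x i * x j * y k + x i * y j * x k + y i * x j * x k)

def fOp (n : ℕ) (x y : Fin n → ZMod 2) : ZMod 2 :=
  ∑ j : Fin n, ∑ i ∈ Finset.Iic j, x i * y j

lemma fO_eq (n : ℕ) (x y : Fin n → ZMod 2) : fO n x y = fOt n x y + fOp n x y := rfl

lemma triple_pt : ∀ xi xj xk yi yj yk wi wj wk : ZMod 2,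
    (xi*xj*yk + xi*yj*xk + yi*xj*xk)
  + ((xi+wi)*(xj+wj)*yk + (xi+wi)*yj*(xk+wk) + yi*(xj+wj)*(xk+wk))
  + (xi*xj*(yk+wk) + xi*(yj+wj)*xk + (yi+wi)*xj*xk)
  + ((xi+wi)*(xj+wj)*(yk+wk) + (xi+wi)*(yj+wj)*(xk+wk) + (yi+wi)*(xj+wj)*(xk+wk))
  = wi*wj*wk + wi*wj*wk + wi*wj*wk := by decide

lemma pair_pt : ∀ xi yj wi wj : ZMod 2,
    xi*yj + (xi+wi)*yj + xi*(yj+wj) + (xi+wi)*(yj+wj) = wi*wj := by decide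

lemma tsum_diff (n : ℕ) (x y w : Fin n → ZMod 2) :
    fOt n x y + fOt n (x+w) y + fOt n x (y+w) + fOt n (x+w) (y+w) = fOt n w w := by
  unfold fOt
  rw [← Finset.sum_add_distrib, ← Finset.sum_add_distrib, ← Finset.sum_add_distrib]
  refine Finset.sum_congr rfl fun k _ => ?_
  rw [← Finset.sum_add_distrib, ← Finset.sum_add_distrib, ← Finset.sum_add_distrib]
  refine Finset.sum_congr rfl fun j _ => ?_
  rw [← Finset.sum_add_distrib, ← Finset.sum_add_distrib, ← Finset.sum_add_distrib]
  refine Finset.sum_congr rfl fun i _ => ?_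
  simp only [Pi.add_apply]
  exact triple_pt _ _ _ _ _ _ _ _ _

lemma psum_diff (n : ℕ) (x y w : Fin n → ZMod 2) :
    fOp n x y + fOp n (x+w) y + fOp n x (y+w) + fOp n (x+w) (y+w) = fOp n w w := by
  unfold fOp
  rw [← Finset.sum_add_distrib, ← Finset.sum_add_distrib, ← Finset.sum_add_distrib]
  refine Finset.sum_congr rfl fun j _ => ?_
  rw [← Finset.sum_add_distrib, ← Finset.sum_add_distrib, ← Finset.sum_add_distrib]
  refine Finset.sum_congr rfl fun i _ => ?_
  simp only [Pi.add_apply]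
  exact pair_pt _ _ _ _

lemma fO_diff (n : ℕ) (x y w : Fin n → ZMod 2) :
    fO n x y + fO n (x+w) y + fO n x (y+w) + fO n (x+w) (y+w) = fO n w w := by
  simp only [fO_eq]
  linear_combination tsum_diff n x y w + psum_diff n x y w

lemma filter_univ_lt {n : ℕ} (j : Fin n) :
    Finset.univ.filter (fun i => i < j) = Finset.Iio j := by
  ext i; simp

lemma zmod2_mul_self (a : ZMod 2) : a * a = a := by revert a; decide

lemma counts {n : ℕ} (w : Fin n → ZMod 2) (s : Finset (Fin n)) :
    ((∑ i ∈ s, w i) = ((s.filter fun i => w i = 1).card.choose 1 : ZMod 2))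
  ∧ ((∑ j ∈ s, ∑ i ∈ s.filter (fun i => i < j), w i * w j)
      = ((s.filter fun i => w i = 1).card.choose 2 : ZMod 2))
  ∧ ((∑ k ∈ s, ∑ j ∈ s.filter (fun j => j < k), ∑ i ∈ s.filter (fun i => i < j),
        w i * w j * w k)
      = ((s.filter fun i => w i = 1).card.choose 3 : ZMod 2)) := by
  induction s using Finset.induction_on_max with
  | empty => simp
  | insert a s hmax ih =>
    have hanotmem : a ∉ s := fun h => lt_irrefl a (hmax a h)
    obtain ⟨ih1, ih2, ih3⟩ := ih
    -- filters of the inserted set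
    have hflt : ∀ j ∈ s, (insert a s).filter (fun i => i < j) = s.filter (fun i => i < j) := by
      intro j hj
      rw [Finset.filter_insert, if_neg (by exact fun h => absurd (hmax j hj) (asymm h))]
    have hflta : (insert a s).filter (fun i => i < a) = s := by
      rw [Finset.filter_insert, if_neg (lt_irrefl a), Finset.filter_true_of_mem hmax]
    have hsum1 : (∑ i ∈ insert a s, w i) = w a + ∑ i ∈ s, w i :=
      Finset.sum_insert hanotmem
    have hsum2 : (∑ j ∈ insert a s, ∑ i ∈ (insert a s).filter (fun i => i < j), w i * w j)
        = (∑ i ∈ s, w i) * w a + ∑ j ∈ s, ∑ i ∈ s.filter (fun i => i < j), w i * w j := by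
      rw [Finset.sum_insert hanotmem, hflta, Finset.sum_mul]
      congr 1
      exact Finset.sum_congr rfl fun j hj => by rw [hflt j hj]
    have hsum3 : (∑ k ∈ insert a s, ∑ j ∈ (insert a s).filter (fun j => j < k),
          ∑ i ∈ (insert a s).filter (fun i => i < j), w i * w j * w k)
        = (∑ j ∈ s, ∑ i ∈ s.filter (fun i => i < j), w i * w j) * w a
          + ∑ k ∈ s, ∑ j ∈ s.filter (fun j => j < k), ∑ i ∈ s.filter (fun i => i < j),
              w i * w j * w k := by
      rw [Finset.sum_insert hanotmem, hflta]
      congr 1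
      · rw [Finset.sum_mul]
        refine Finset.sum_congr rfl fun j hj => ?_
        rw [hflt j hj, Finset.sum_mul]
      · refine Finset.sum_congr rfl fun k hk => ?_
        rw [hflt k hk]
        refine Finset.sum_congr rfl fun j hj => ?_
        rw [hflt j (Finset.mem_of_mem_filter j hj)]
    rcases zmod2_cases (w a) with hwa | hwa
    · have hfw : (insert a s).filter (fun i => w i = 1) = s.filter (fun i => w i = 1) := by
        rw [Finset.filter_insert, if_neg (by rw [hwa]; decide)]
      rw [hfw, hsum1, hsum2, hsum3, hwa]
      simp [ih1, ih2, ih3]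
    · have hfw : (insert a s).filter (fun i => w i = 1)
          = insert a (s.filter (fun i => w i = 1)) := by
        rw [Finset.filter_insert, if_pos hwa]
      have hcard : ((insert a s).filter (fun i => w i = 1)).card
          = (s.filter (fun i => w i = 1)).card + 1 := by
        rw [hfw, Finset.card_insert_of_notMem (fun h => hanotmem (Finset.mem_of_mem_filter a h))]
      rw [hcard, hsum1, hsum2, hsum3, hwa, ih1, ih2, ih3]
      refine ⟨?_, ?_, ?_⟩ <;>
        rw [Nat.choose_succ_succ] <;> push_cast [Nat.choose_zero_right] <;> ring

lemma choose_parity (m : ℕ) :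
    (m.choose 2 % 2 = if m % 4 = 2 ∨ m % 4 = 3 then 1 else 0)
  ∧ (m.choose 3 % 2 = if m % 4 = 3 then 1 else 0) := by
  induction m with
  | zero => simp
  | succ k ih =>
    obtain ⟨h2, h3⟩ := ih
    rw [show k + 1 = k.succ from rfl, Nat.choose_succ_succ k 1, Nat.choose_succ_succ k 2,
      Nat.choose_one_right]
    simp only [show Nat.succ 1 = 2 from rfl, show Nat.succ 2 = 3 from rfl]
    constructor <;> split_ifs at h2 h3 ⊢ <;> omega

lemma parity_main (m : ℕ) : (m.choose 3 + m.choose 2 + m.choose 1) % 2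
    = if m % 4 = 0 then 0 else 1 := by
  obtain ⟨h2, h3⟩ := choose_parity m
  rw [Nat.choose_one_right]
  split_ifs at h2 h3 ⊢ <;> omega

lemma zmod2_triple (a : ZMod 2) : a + a + a = a := by revert a; decide

lemma fO_self (n : ℕ) (w : Fin n → ZMod 2) :
    fO n w w = (((weight n w).choose 3 + (weight n w).choose 2 + (weight n w).choose 1 : ℕ)
      : ZMod 2) := by
  obtain ⟨c1, c2, c3⟩ := counts w (Finset.univ : Finset (Fin n))
  have hT : fOt n w w = ((weight n w).choose 3 : ZMod 2) := by
    unfold fOt weight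
    rw [← c3]
    refine Finset.sum_congr rfl fun k _ => ?_
    rw [← filter_univ_lt k]
    refine Finset.sum_congr rfl fun j _ => ?_
    rw [← filter_univ_lt j]
    exact Finset.sum_congr rfl fun i _ => zmod2_triple _
  have hP : fOp n w w = ((weight n w).choose 1 : ZMod 2) + ((weight n w).choose 2 : ZMod 2) := by
    unfold fOp weight
    have : ∀ j : Fin n, (∑ i ∈ Finset.Iic j, w i * w j)
        = w j + ∑ i ∈ Finset.Iio j, w i * w j := by
      intro j
      rw [← Finset.Iio_insert, Finset.sum_insert (by simp), zmod2_mul_self]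
    rw [Finset.sum_congr rfl fun j _ => this j, Finset.sum_add_distrib, c1, ← c2]
    congr 1
    exact Finset.sum_congr rfl fun j _ => by rw [← filter_univ_lt j]
  rw [fO_eq, hT, hP]
  push_cast
  ring

lemma fO_self_eq (n : ℕ) (w : Fin n → ZMod 2) :
    fO n w w = if weight n w % 4 = 0 then 0 else 1 := by
  rw [fO_self, ← ZMod.natCast_mod, parity_main]
  split_ifs <;> simp

lemma fO_self_one (n : ℕ) (w : Fin n → ZMod 2) (h : weight n w % 4 ≠ 0) :
    fO n w w = 1 := by rw [fO_self_eq, if_neg h]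

lemma fO_self_zero (n : ℕ) (w : Fin n → ZMod 2) (h : weight n w % 4 = 0) :
    fO n w w = 0 := by rw [fO_self_eq, if_pos h]

/-- `(A, B)` is a multiplicative pair with respect to the twisting function `f`. -/
def IsMultiplicativePair (n : ℕ)
    (f : (Fin n → ZMod 2) → (Fin n → ZMod 2) → ZMod 2)
    (A B : Finset (Fin n → ZMod 2)) : Prop :=
  ∀ (a b : (Fin n → ZMod 2) → ℝ),
    (∑ x ∈ A, a x ^ 2) * (∑ y ∈ B, b y ^ 2) =
      ∑ z : Fin n → ZMod 2,
        (∑ x ∈ A, ∑ y ∈ B, if x + y = z then sgn (f x y) * a x * b y else 0) ^ 2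

lemma sgn_sq (a : ZMod 2) : sgn a * sgn a = 1 := by
  rw [sgn_mul, zmod2_add_self, sgn_zero]

lemma sgn_opp {u v : ZMod 2} (h : u + v = 1) : sgn u + sgn v = 0 := by
  rcases zmod2_cases u with hu | hu <;> rcases zmod2_cases v with hv | hv <;>
    subst hu <;> subst hv <;> simp_all [sgn_zero, sgn_one] <;> revert h <;> decide

lemma vec_eq_of_add_eq_zero {n : ℕ} {u v : Fin n → ZMod 2} (h : u + v = 0) : u = v := by
  linear_combination h - vec_add_self v

lemma sum_ite_mul_ite {α : Type*} [Fintype α] [DecidableEq α] (c d : α) (U V : ℝ) :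
    (∑ z : α, (if c = z then U else 0) * (if d = z then V else 0)) = if c = d then U * V else 0 := by
  have h : ∀ z, (if c = z then U else 0) * (if d = z then V else 0)
      = if c = z then (if d = z then U * V else 0) else 0 := by
    intro z; split_ifs <;> ring
  rw [Finset.sum_congr rfl fun z _ => h z, Finset.sum_ite_eq]
  simp [eq_comm]

/-- Lemma 4.8: `(A, B)` is a multiplicative pair for `f_O` iff every nonzero
element `w` of `(A+A) ∩ (B+B)` has weight not divisible by 4. -/
theorem multiplicative_pair_iff_weight (n : ℕ)
    (A B : Finset (Fin n → ZMod 2)) :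
    IsMultiplicativePair n (fO n) A B ↔
      ∀ w ∈ (A + A) ∩ (B + B), w ≠ 0 → weight n w % 4 ≠ 0 := by
  constructor
  · -- forward direction
    intro hmp w hw hwne h4
    obtain ⟨hwA, hwB⟩ := Finset.mem_inter.1 hw
    obtain ⟨x, hx, x', hx', hxx'⟩ := Finset.mem_add.1 hwA
    obtain ⟨y, hy, y', hy', hyy'⟩ := Finset.mem_add.1 hwB
    have hxne : x ≠ x' := by rintro rfl; exact hwne (by rw [← hxx', vec_add_self])
    have hyne : y ≠ y' := by rintro rfl; exact hwne (by rw [← hyy', vec_add_self])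
    have hsubA : ({x, x'} : Finset (Fin n → ZMod 2)) ⊆ A := by
      intro v hv
      rcases Finset.mem_insert.1 hv with rfl | hv
      · exact hx
      · rw [Finset.mem_singleton.1 hv]; exact hx'
    have hsubB : ({y, y'} : Finset (Fin n → ZMod 2)) ⊆ B := by
      intro v hv
      rcases Finset.mem_insert.1 hv with rfl | hv
      · exact hy
      · rw [Finset.mem_singleton.1 hv]; exact hy'
    have hmp' := hmp (fun v => if v = x ∨ v = x' then 1 else 0)
      (fun v => if v = y ∨ v = y' then 1 else 0)
    have hA2 : (∑ v ∈ A, (if v = x ∨ v = x' then (1:ℝ) else 0) ^ 2) = 2 := by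
      rw [← Finset.sum_subset hsubA (by
        intro v _ hvn
        simp only [Finset.mem_insert, Finset.mem_singleton, not_or] at hvn
        rw [if_neg (not_or.mpr hvn)]; norm_num)]
      rw [Finset.sum_pair hxne, if_pos (Or.inl rfl), if_pos (Or.inr rfl)]
      norm_num
    have hB2 : (∑ v ∈ B, (if v = y ∨ v = y' then (1:ℝ) else 0) ^ 2) = 2 := by
      rw [← Finset.sum_subset hsubB (by
        intro v _ hvn
        simp only [Finset.mem_insert, Finset.mem_singleton, not_or] at hvn
        rw [if_neg (not_or.mpr hvn)]; norm_num)]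
      rw [Finset.sum_pair hyne, if_pos (Or.inl rfl), if_pos (Or.inr rfl)]
      norm_num
    have h1 : x' + y' = x + y := by
      have h := hxx'.trans hyy'.symm
      linear_combination h + vec_add_self y' - vec_add_self x
    have h2 : x' + y = x + y' := by
      have h := hxx'.trans hyy'.symm
      linear_combination h + vec_add_self y - vec_add_self x
    have hinner : ∀ z : Fin n → ZMod 2,
        (∑ u ∈ A, ∑ v ∈ B, if u + v = z then
            sgn (fO n u v) * (if u = x ∨ u = x' then (1:ℝ) else 0)
              * (if v = y ∨ v = y' then 1 else 0) else 0)
        = (if x + y = z then sgn (fO n x y) + sgn (fO n x' y') else 0)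
          + (if x + y' = z then sgn (fO n x y') + sgn (fO n x' y) else 0) := by
      intro z
      rw [← Finset.sum_subset hsubA (by
        intro u _ hun
        simp only [Finset.mem_insert, Finset.mem_singleton, not_or] at hun
        refine Finset.sum_eq_zero fun v _ => ?_
        rw [if_neg (not_or.mpr hun)]
        split_ifs <;> ring)]
      have hBred : ∀ u : Fin n → ZMod 2, (u = x ∨ u = x') →
          (∑ v ∈ B, if u + v = z then
              sgn (fO n u v) * (if u = x ∨ u = x' then (1:ℝ) else 0)
                * (if v = y ∨ v = y' then 1 else 0) else 0)
          = (if u + y = z then sgn (fO n u y) else 0)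
            + (if u + y' = z then sgn (fO n u y') else 0) := by
        intro u hu
        rw [← Finset.sum_subset hsubB (by
          intro v _ hvn
          simp only [Finset.mem_insert, Finset.mem_singleton, not_or] at hvn
          rw [if_neg (not_or.mpr hvn)]
          split_ifs <;> ring)]
        rw [Finset.sum_pair hyne, if_pos hu, if_pos (Or.inl rfl), if_pos (Or.inr rfl)]
        split_ifs <;> ring
      rw [Finset.sum_pair hxne, hBred x (Or.inl rfl), hBred x' (Or.inr rfl), h1, h2]
      split_ifs <;> ring
    have hsq : ∀ z : Fin n → ZMod 2,
        ((if x + y = z then sgn (fO n x y) + sgn (fO n x' y') else 0)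
          + (if x + y' = z then sgn (fO n x y') + sgn (fO n x' y) else 0)) ^ 2
        = (if x + y = z then (sgn (fO n x y) + sgn (fO n x' y')) ^ 2 else 0)
          + (if x + y' = z then (sgn (fO n x y') + sgn (fO n x' y)) ^ 2 else 0) := by
      intro z
      split_ifs with hc hd
      · exact absurd (add_left_cancel (hc.trans hd.symm)) hyne
      · ring
      · ring
      · ring
    have hR : (∑ z : Fin n → ZMod 2,
        (∑ u ∈ A, ∑ v ∈ B, if u + v = z then
            sgn (fO n u v) * (if u = x ∨ u = x' then (1:ℝ) else 0)
              * (if v = y ∨ v = y' then 1 else 0) else 0) ^ 2)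
        = (sgn (fO n x y) + sgn (fO n x' y')) ^ 2
          + (sgn (fO n x y') + sgn (fO n x' y)) ^ 2 := by
      rw [Finset.sum_congr rfl fun z _ => by rw [hinner z, hsq z]]
      rw [Finset.sum_add_distrib, Finset.sum_ite_eq, Finset.sum_ite_eq]
      simp
    rw [hA2, hB2, hR] at hmp'
    have hxw : x + w = x' := by rw [← hxx']; linear_combination vec_add_self x
    have hyw : y + w = y' := by rw [← hyy']; linear_combination vec_add_self y
    have hfd := fO_diff n x y w
    rw [hxw, hyw, fO_self_zero n w h4] at hfd
    have hprod : sgn (fO n x y) * sgn (fO n x' y') * (sgn (fO n x y') * sgn (fO n x' y))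
        = 1 := by
      rw [sgn_mul, sgn_mul, sgn_mul,
        show fO n x y + fO n x' y' + (fO n x y' + fO n x' y) = 0 from by linear_combination hfd,
        sgn_zero]
    rcases sgn_cases (fO n x y) with e1 | e1 <;>
      rcases sgn_cases (fO n x' y') with e2 | e2 <;>
      rcases sgn_cases (fO n x y') with e3 | e3 <;>
      rcases sgn_cases (fO n x' y) with e4 | e4 <;>
      rw [e1, e2, e3, e4] at hmp' hprod <;> revert hmp' hprod <;> norm_num
  · -- reverse direction
    intro hcond a b
    have key : ∀ p q : (Fin n → ZMod 2) × (Fin n → ZMod 2), p.1 ∈ A → p.2 ∈ B →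
        q.1 ∈ A → q.2 ∈ B → p ≠ q →
        ((if p.1 + p.2 = q.1 + q.2 then
            (sgn (fO n p.1 p.2) * a p.1 * b p.2) * (sgn (fO n q.1 q.2) * a q.1 * b q.2) else 0)
        + (if p.1 + q.2 = q.1 + p.2 then
            (sgn (fO n p.1 q.2) * a p.1 * b q.2) * (sgn (fO n q.1 p.2) * a q.1 * b p.2) else 0))
        = 0 := by
      intro p q hp1 hp2 hq1 hq2 hpq
      by_cases hc : p.1 + p.2 = q.1 + q.2
      · have hc' : p.1 + q.2 = q.1 + p.2 := by
          linear_combination hc + vec_add_self q.2 - vec_add_self p.2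
        rw [if_pos hc, if_pos hc']
        have hp1q1 : p.1 ≠ q.1 := by
          intro h
          apply hpq
          have h2' : p.2 = q.2 := add_left_cancel (h ▸ hc)
          exact Prod.ext h h2'
        have hw0 : p.1 + q.1 ≠ 0 := fun h => hp1q1 (vec_eq_of_add_eq_zero h)
        have hBeq : p.1 + q.1 = p.2 + q.2 := by
          linear_combination hc + vec_add_self q.1 - vec_add_self p.2
        have hwmem : p.1 + q.1 ∈ (A + A) ∩ (B + B) := by
          refine Finset.mem_inter.2 ⟨Finset.add_mem_add hp1 hq1, ?_⟩
          rw [hBeq]; exact Finset.add_mem_add hp2 hq2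
        have h4 := hcond _ hwmem hw0
        have hfd := fO_diff n p.1 p.2 (p.1 + q.1)
        have e1 : p.1 + (p.1 + q.1) = q.1 := by linear_combination vec_add_self p.1
        have e2 : p.2 + (p.1 + q.1) = q.2 := by
          linear_combination hc + vec_add_self q.1
        rw [e1, e2, fO_self_one n _ h4] at hfd
        have hsgn : sgn (fO n p.1 p.2) * sgn (fO n q.1 q.2)
            + sgn (fO n p.1 q.2) * sgn (fO n q.1 p.2) = 0 := by
          rw [sgn_mul, sgn_mul]
          exact sgn_opp (by linear_combination hfd)
        linear_combination (a p.1 * b p.2 * a q.1 * b q.2) * hsgn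
      · have hc' : ¬(p.1 + q.2 = q.1 + p.2) := fun h =>
          hc (by linear_combination h + vec_add_self p.2 - vec_add_self q.2)
        rw [if_neg hc, if_neg hc']; ring
    calc (∑ x ∈ A, a x ^ 2) * (∑ y ∈ B, b y ^ 2)
        = ∑ p ∈ A ×ˢ B, a p.1 ^ 2 * b p.2 ^ 2 := by
          rw [Finset.sum_mul_sum, ← Finset.sum_product']
      _ = ∑ p ∈ A ×ˢ B,
            (if p.1 + p.2 = p.1 + p.2 then
              (sgn (fO n p.1 p.2) * a p.1 * b p.2) * (sgn (fO n p.1 p.2) * a p.1 * b p.2)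
             else 0) := by
          refine Finset.sum_congr rfl fun p _ => ?_
          rw [if_pos rfl]
          linear_combination (-(a p.1 ^ 2 * b p.2 ^ 2)) * sgn_sq (fO n p.1 p.2)
      _ = ∑ r ∈ ((A ×ˢ B) ×ˢ (A ×ˢ B)).filter (fun r => r.1 = r.2),
            (if r.1.1 + r.1.2 = r.2.1 + r.2.2 then
              (sgn (fO n r.1.1 r.1.2) * a r.1.1 * b r.1.2)
                * (sgn (fO n r.2.1 r.2.2) * a r.2.1 * b r.2.2) else 0) := by
          refine (Finset.sum_nbij' (fun r => r.1) (fun p => (p, p)) ?_ ?_ ?_ ?_ ?_).symm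
          · intro r hr
            exact (Finset.mem_product.1 (Finset.mem_filter.1 hr).1).1
          · intro p hp
            exact Finset.mem_filter.2 ⟨Finset.mem_product.2 ⟨hp, hp⟩, rfl⟩
          · intro r hr
            have h := (Finset.mem_filter.1 hr).2
            exact (congrArg (Prod.mk r.1) h).trans rfl
          · intro p _; rfl
          · intro r hr
            obtain ⟨p, q⟩ := r
            have h2' : p = q := (Finset.mem_filter.1 hr).2
            subst h2'
            rfl
      _ = ∑ r ∈ (A ×ˢ B) ×ˢ (A ×ˢ B),
            (if r.1.1 + r.1.2 = r.2.1 + r.2.2 then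
              (sgn (fO n r.1.1 r.1.2) * a r.1.1 * b r.1.2)
                * (sgn (fO n r.2.1 r.2.2) * a r.2.1 * b r.2.2) else 0) := by
          rw [← Finset.sum_filter_add_sum_filter_not ((A ×ˢ B) ×ˢ (A ×ˢ B))
            (fun r => r.1 = r.2)]
          have hzero : (∑ r ∈ ((A ×ˢ B) ×ˢ (A ×ˢ B)).filter (fun r => ¬ r.1 = r.2),
              (if r.1.1 + r.1.2 = r.2.1 + r.2.2 then
                (sgn (fO n r.1.1 r.1.2) * a r.1.1 * b r.1.2)
                  * (sgn (fO n r.2.1 r.2.2) * a r.2.1 * b r.2.2) else 0)) = 0 := by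
            refine Finset.sum_involution
              (fun r _ => ((r.1.1, r.2.2), (r.2.1, r.1.2))) ?_ ?_ ?_ ?_
            · intro r hr
              obtain ⟨hmem, hne⟩ := Finset.mem_filter.1 hr
              obtain ⟨h1', h2'⟩ := Finset.mem_product.1 hmem
              obtain ⟨ha1, hb1⟩ := Finset.mem_product.1 h1'
              obtain ⟨ha2, hb2⟩ := Finset.mem_product.1 h2'
              exact key r.1 r.2 ha1 hb1 ha2 hb2 hne
            · intro r hr hne0 heq
              obtain ⟨hmem, hne⟩ := Finset.mem_filter.1 hr
              have hc : r.1.1 + r.1.2 = r.2.1 + r.2.2 := by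
                by_contra h; exact hne0 (if_neg h)
              have h22 : r.2.2 = r.1.2 := congrArg (fun t => t.1.2) heq
              have h11 : r.1.1 = r.2.1 := by
                apply add_right_cancel (b := r.1.2)
                rw [hc, h22]
              exact hne (Prod.ext h11 h22.symm)
            · intro r hr
              obtain ⟨hmem, hne⟩ := Finset.mem_filter.1 hr
              obtain ⟨h1', h2'⟩ := Finset.mem_product.1 hmem
              obtain ⟨ha1, hb1⟩ := Finset.mem_product.1 h1'
              obtain ⟨ha2, hb2⟩ := Finset.mem_product.1 h2'
              refine Finset.mem_filter.2 ⟨Finset.mem_product.2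
                ⟨Finset.mem_product.2 ⟨ha1, hb2⟩, Finset.mem_product.2 ⟨ha2, hb1⟩⟩, ?_⟩
              intro h
              have e11 := congrArg Prod.fst h
              have e22 := congrArg Prod.snd h
              simp only at e11 e22
              exact hne (Prod.ext e11 e22.symm)
            · intro r _
              simp
          rw [hzero, add_zero]
      _ = ∑ p ∈ A ×ˢ B, ∑ q ∈ A ×ˢ B,
            (if p.1 + p.2 = q.1 + q.2 then
              (sgn (fO n p.1 p.2) * a p.1 * b p.2) * (sgn (fO n q.1 q.2) * a q.1 * b q.2)
             else 0) := by
          rw [Finset.sum_product]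
      _ = ∑ p ∈ A ×ˢ B, ∑ q ∈ A ×ˢ B, ∑ z : Fin n → ZMod 2,
            (if p.1 + p.2 = z then sgn (fO n p.1 p.2) * a p.1 * b p.2 else 0)
              * (if q.1 + q.2 = z then sgn (fO n q.1 q.2) * a q.1 * b q.2 else 0) := by
          refine Finset.sum_congr rfl fun p _ => Finset.sum_congr rfl fun q _ => ?_
          rw [sum_ite_mul_ite]
      _ = ∑ z : Fin n → ZMod 2, ∑ p ∈ A ×ˢ B, ∑ q ∈ A ×ˢ B,
            (if p.1 + p.2 = z then sgn (fO n p.1 p.2) * a p.1 * b p.2 else 0)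
              * (if q.1 + q.2 = z then sgn (fO n q.1 q.2) * a q.1 * b q.2 else 0) := by
          rw [show (∑ p ∈ A ×ˢ B, ∑ q ∈ A ×ˢ B, ∑ z : Fin n → ZMod 2,
            (if p.1 + p.2 = z then sgn (fO n p.1 p.2) * a p.1 * b p.2 else 0)
              * (if q.1 + q.2 = z then sgn (fO n q.1 q.2) * a q.1 * b q.2 else 0))
            = ∑ p ∈ A ×ˢ B, ∑ z : Fin n → ZMod 2, ∑ q ∈ A ×ˢ B,
            (if p.1 + p.2 = z then sgn (fO n p.1 p.2) * a p.1 * b p.2 else 0)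
              * (if q.1 + q.2 = z then sgn (fO n q.1 q.2) * a q.1 * b q.2 else 0) from
            Finset.sum_congr rfl fun p _ => Finset.sum_comm]
          exact Finset.sum_comm
      _ = ∑ z : Fin n → ZMod 2,
            (∑ p ∈ A ×ˢ B, (if p.1 + p.2 = z then sgn (fO n p.1 p.2) * a p.1 * b p.2 else 0))
              ^ 2 := by
          refine Finset.sum_congr rfl fun z _ => ?_
          rw [sq, Finset.sum_mul_sum]
      _ = ∑ z : Fin n → ZMod 2,
            (∑ x ∈ A, ∑ y ∈ B, if x + y = z then sgn (fO n x y) * a x * b y else 0) ^ 2 := by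
          refine Finset.sum_congr rfl fun z _ => ?_
          exact congrArg (· ^ 2) (Finset.sum_product' A B
            fun u v => if u + v = z then sgn (fO n u v) * a u * b v else 0)
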